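/- Let u be twice continuously differentiable on the closure of Ω, let φ and α be real constants, and suppose u satisfies the boundary conditions (BC). Then πρ²α²/h ≤ ∫_Ω (Δu)² dx. -/

import Mathlib

open MeasureTheory Real

/-- The open cylinder `Ω = {(x,y,z) : x² + y² < ρ², 0 < z < h}` in `ℝ³`. -/
def cyl (ρ h : ℝ) : Set (Fin 3 → ℝ) :=
  {x | (x 0) ^ 2 + (x 1) ^ 2 < ρ ^ 2 ∧ 0 < x 2 ∧ x 2 < h}

/-- The `i`-th partial derivative of `f`, computed within the closed cylinder. -/
noncomputable def pdC (ρ h : ℝ) (i : Fin 3) (f : (Fin 3 → ℝ) → ℝ) (x : Fin 3 → ℝ) : ℝ :=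
  fderivWithin ℝ f (closure (cyl ρ h)) x (Pi.single i 1)

/-- The Laplacian of `f`, computed within the closed cylinder. -/
noncomputable def lapC (ρ h : ℝ) (f : (Fin 3 → ℝ) → ℝ) (x : Fin 3 → ℝ) : ℝ :=
  ∑ i, pdC ρ h i (pdC ρ h i f) x

/-- The boundary conditions (BC): `u = φ` and `∂u/∂z = α` on the top disc `z = h`;
`u = 0` and `∂u/∂z = 0` on the bottom disc `z = 0`; and vanishing normal derivative
`x ∂u/∂x + y ∂u/∂y = 0` on the lateral boundary `x² + y² = ρ²`, `0 ≤ z ≤ h`. -/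
def BC (ρ h : ℝ) (u : (Fin 3 → ℝ) → ℝ) (φ α : ℝ) : Prop :=
  (∀ x y : ℝ, x ^ 2 + y ^ 2 ≤ ρ ^ 2 →
      u ![x, y, h] = φ ∧ pdC ρ h 2 u ![x, y, h] = α ∧
      u ![x, y, 0] = 0 ∧ pdC ρ h 2 u ![x, y, 0] = 0) ∧
  (∀ x y z : ℝ, x ^ 2 + y ^ 2 = ρ ^ 2 → 0 ≤ z → z ≤ h →
      x * pdC ρ h 0 u ![x, y, z] + y * pdC ρ h 1 u ![x, y, z] = 0)

/-!
By the divergence theorem, `∫_Ω Δu` is the flux of `∇u` through `∂Ω`. The flux through the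
lateral surface vanishes by the Neumann condition and the flux through the bottom by
`∂u/∂z = 0`, so `∫_Ω Δu = α · πρ²`. Since `|Ω| = πρ²h`, Cauchy–Schwarz gives
`(απρ²)² ≤ πρ²h ∫_Ω (Δu)²`.

The divergence theorem is derived directly: Fubini reduces the `z`-part to the fundamental theorem
of calculus on vertical segments. On each horizontal slice, the `x`- and `y`-parts become integrals
of endpoint values over the chords of the disc; the substitution `s = ρ sin θ` turns these into
a single integral over the boundary circle, whose integrand `x ∂ₓu + y ∂ᵧu` vanishes.
-/

open Set

theorem sq_setIntegral_div_measureReal_le {α : Type*} [MeasurableSpace α] {μ : Measure α}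
    {s : Set α} (hs : μ s ≠ ⊤) {f : α → ℝ} (hf : IntegrableOn f s μ)
    (hf2 : IntegrableOn (fun x => f x ^ 2) s μ) :
    (∫ x in s, f x ∂μ) ^ 2 / μ.real s ≤ ∫ x in s, f x ^ 2 ∂μ := by
  rcases (measureReal_nonneg : 0 ≤ μ.real s).eq_or_lt with hV | hV
  · rw [← hV, div_zero]
    exact setIntegral_nonneg_of_ae_restrict (Filter.Eventually.of_forall fun x => sq_nonneg _)
  -- expand `0 ≤ ∫ (f - m)²` at the mean value `m`
  set m := (∫ x in s, f x ∂μ) / μ.real s with hm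
  have hexpand : ∫ x in s, (f x - m) ^ 2 ∂μ =
      (∫ x in s, f x ^ 2 ∂μ) - 2 * m * (∫ x in s, f x ∂μ) + μ.real s * m ^ 2 := by
    have hlin : IntegrableOn (fun x => f x ^ 2 - 2 * m * f x) s μ :=
      hf2.sub (hf.const_mul (2 * m))
    simp_rw [show ∀ x, (f x - m) ^ 2 = (f x ^ 2 - 2 * m * f x) + m ^ 2 from fun x => by ring]
    rw [integral_add hlin (integrableOn_const hs), integral_sub hf2 (hf.const_mul _),
      integral_const_mul, setIntegral_const, smul_eq_mul]
  have hnonneg : 0 ≤ ∫ x in s, (f x - m) ^ 2 ∂μ :=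
    setIntegral_nonneg_of_ae_restrict (Filter.Eventually.of_forall fun x => sq_nonneg _)
  have hmV : (∫ x in s, f x ∂μ) = μ.real s * m := by rw [hm]; field_simp
  rw [hexpand, hmV] at hnonneg
  rw [div_le_iff₀ hV, hmV]
  nlinarith [mul_nonneg hV.le hnonneg]

def disc (ρ : ℝ) : Set (ℝ × ℝ) := {q | q.1 ^ 2 + q.2 ^ 2 < ρ ^ 2}

def closedDisc (ρ : ℝ) : Set (ℝ × ℝ) := {q | q.1 ^ 2 + q.2 ^ 2 ≤ ρ ^ 2}

section Disc

variable {ρ : ℝ}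

theorem measurableSet_disc : MeasurableSet (disc ρ) :=
  (isOpen_lt (by fun_prop) continuous_const).measurableSet

theorem disc_subset_closedDisc : disc ρ ⊆ closedDisc ρ :=
  fun q hq => show q.1 ^ 2 + q.2 ^ 2 ≤ ρ ^ 2 from le_of_lt hq

theorem isCompact_closedDisc : IsCompact (closedDisc ρ) := by
  refine Metric.isCompact_of_isClosed_isBounded (isClosed_le (by fun_prop) continuous_const) ?_
  refine (Metric.isBounded_Icc (-|ρ|) |ρ| |>.prod (Metric.isBounded_Icc (-|ρ|) |ρ|)).subset ?_
  rintro ⟨a, b⟩ hq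
  change a ^ 2 + b ^ 2 ≤ ρ ^ 2 at hq
  simp only [mem_prod, mem_Icc, ← abs_le]
  exact ⟨sq_le_sq.1 (by nlinarith), sq_le_sq.1 (by nlinarith)⟩

theorem mk_mem_disc_iff_mem_Ioo {a b : ℝ} :
    (a, b) ∈ disc ρ ↔ b ∈ Ioo (-√(ρ ^ 2 - a ^ 2)) √(ρ ^ 2 - a ^ 2) := by
  rw [mem_Ioo, ← Real.sq_lt, disc, mem_ofPred_eq, ← lt_sub_iff_add_lt']

theorem sq_add_sq_le_of_mem_Icc_sqrt {a b : ℝ} (ha : a ^ 2 ≤ ρ ^ 2)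
    (hb : b ∈ Icc (-√(ρ ^ 2 - a ^ 2)) √(ρ ^ 2 - a ^ 2)) : a ^ 2 + b ^ 2 ≤ ρ ^ 2 := by
  have := (Real.sq_le (sub_nonneg.2 ha)).2 hb
  linarith

theorem volume_real_disc : volume.real (disc ρ) = π * ρ ^ 2 := by
  have hpre : Complex.measurableEquivRealProd ⁻¹' disc ρ = Metric.ball 0 |ρ| := by
    ext z
    rw [mem_preimage, mem_ball_zero_iff, ← sq_lt_sq₀ (norm_nonneg _) (abs_nonneg _), sq_abs,
      Complex.sq_norm, Complex.normSq_apply, Complex.measurableEquivRealProd_apply]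
    simp only [disc, mem_ofPred_eq, sq]
  rw [measureReal_def, ← Complex.volume_preserving_equiv_real_prod.measure_preimage
    measurableSet_disc.nullMeasurableSet, hpre, Complex.volume_ball]
  simp [mul_comm]

theorem integral_disc_eq_intervalIntegral (hρ : 0 ≤ ρ) {g : ℝ × ℝ → ℝ}
    (hg : IntegrableOn g (disc ρ)) :
    ∫ q in disc ρ, g q =
      ∫ a in (-ρ)..ρ, ∫ b in (-√(ρ ^ 2 - a ^ 2))..√(ρ ^ 2 - a ^ 2), g (a, b) := by
  have hsection : ∀ a, (fun b => (disc ρ).indicator g (a, b)) =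
      (Ioo (-√(ρ ^ 2 - a ^ 2)) √(ρ ^ 2 - a ^ 2)).indicator fun b => g (a, b) := fun a => by
    ext b
    by_cases hb : (a, b) ∈ disc ρ
    · rw [indicator_of_mem hb, indicator_of_mem (mk_mem_disc_iff_mem_Ioo.1 hb)]
    · rw [indicator_of_notMem hb, indicator_of_notMem (mt mk_mem_disc_iff_mem_Ioo.2 hb)]
  have hint : Integrable ((disc ρ).indicator g) (volume.prod volume) := by
    rw [← Measure.volume_eq_prod]
    exact (integrable_indicator_iff measurableSet_disc).2 hg
  rw [← integral_indicator measurableSet_disc, Measure.volume_eq_prod, integral_prod _ hint,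
    intervalIntegral.integral_of_le (by linarith)]
  simp_rw [hsection, integral_indicator measurableSet_Ioo, ← integral_Ioc_eq_integral_Ioo,
    ← intervalIntegral.integral_of_le (neg_le_self (Real.sqrt_nonneg _))]
  refine (setIntegral_eq_integral_of_forall_compl_eq_zero fun a ha => ?_).symm
  -- outside `(-ρ, ρ]` the chord degenerates: `√(ρ ^ 2 - a ^ 2) = 0`
  have hout : ρ ^ 2 - a ^ 2 ≤ 0 := by
    simp only [mem_Ioc, not_and_or, not_lt, not_le] at ha
    rcases ha with ha | ha <;> nlinarith
  simp [Real.sqrt_eq_zero_of_nonpos hout]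

theorem integral_disc_eq_intervalIntegral_swap (hρ : 0 ≤ ρ) {g : ℝ × ℝ → ℝ}
    (hg : IntegrableOn g (disc ρ)) :
    ∫ q in disc ρ, g q =
      ∫ b in (-ρ)..ρ, ∫ a in (-√(ρ ^ 2 - b ^ 2))..√(ρ ^ 2 - b ^ 2), g (a, b) := by
  have hswap : MeasurePreserving (Prod.swap : ℝ × ℝ → ℝ × ℝ) :=
    Measure.measurePreserving_swap
  have hpre : Prod.swap ⁻¹' disc ρ = disc ρ := by
    ext q
    simp only [disc, mem_preimage, Prod.fst_swap, Prod.snd_swap, mem_ofPred_eq, add_comm]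
  have hemb := (MeasurableEquiv.prodComm : ℝ × ℝ ≃ᵐ ℝ × ℝ).measurableEmbedding
  have hg' : IntegrableOn (g ∘ Prod.swap) (disc ρ) := by
    rwa [← hpre, hswap.integrableOn_comp_preimage hemb]
  rw [← hswap.setIntegral_preimage_emb hemb, hpre]
  exact integral_disc_eq_intervalIntegral hρ hg'

theorem sqrt_sq_sub_mul_sin_sq (hρ : 0 ≤ ρ) (θ : ℝ) :
    √(ρ ^ 2 - (ρ * sin θ) ^ 2) = ρ * |cos θ| := by
  rw [show ρ ^ 2 - (ρ * sin θ) ^ 2 = (ρ * cos θ) ^ 2 by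
      linear_combination (-ρ ^ 2) * sin_sq_add_cos_sq θ,
    Real.sqrt_sq_eq_abs, abs_mul, abs_of_nonneg hρ]

theorem integral_comp_mul_sin (hρ : 0 ≤ ρ) {g : ℝ → ℝ}
    (hg : ContinuousOn g (Icc (-ρ) ρ)) (a b : ℝ) :
    ∫ θ in a..b, g (ρ * sin θ) * (ρ * cos θ) = ∫ s in ρ * sin a..ρ * sin b, g s := by
  refine intervalIntegral.integral_comp_mul_deriv'' (f := fun θ => ρ * sin θ) (by fun_prop)
    (fun θ _ => ((hasDerivAt_sin θ).const_mul ρ).hasDerivWithinAt) (by fun_prop)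
    (hg.mono ?_)
  rintro _ ⟨θ, -, rfl⟩
  constructor <;> nlinarith [neg_one_le_sin θ, sin_le_one θ]

theorem mem_closedDisc_circle (θ : ℝ) : (ρ * cos θ, ρ * sin θ) ∈ closedDisc ρ :=
  (by linear_combination ρ ^ 2 * sin_sq_add_cos_sq θ :
    (ρ * cos θ) ^ 2 + (ρ * sin θ) ^ 2 = ρ ^ 2).le

theorem ContinuousOn.comp_circle {P : ℝ × ℝ → ℝ} (hP : ContinuousOn P (closedDisc ρ)) :
    Continuous fun θ => P (ρ * cos θ, ρ * sin θ) :=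
  hP.comp_continuous (by fun_prop) mem_closedDisc_circle

theorem mem_closedDisc_chord_end {s : ℝ} (hs : s ∈ Icc (-ρ) ρ) {x : ℝ}
    (hx : x = √(ρ ^ 2 - s ^ 2) ∨ x = -√(ρ ^ 2 - s ^ 2)) : (x, s) ∈ closedDisc ρ := by
  have hsq : x ^ 2 = ρ ^ 2 - s ^ 2 := by
    rcases hx with rfl | rfl <;>
      simp only [neg_sq, Real.sq_sqrt (sub_nonneg.2 (sq_le_sq' hs.1 hs.2))]
  show x ^ 2 + s ^ 2 ≤ ρ ^ 2
  linarith

theorem integral_sub_horizontal_chord_ends (hρ : 0 ≤ ρ) {P : ℝ × ℝ → ℝ}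
    (hP : ContinuousOn P (closedDisc ρ)) :
    ∫ s in (-ρ)..ρ, (P (√(ρ ^ 2 - s ^ 2), s) - P (-√(ρ ^ 2 - s ^ 2), s)) =
      ∫ θ in (-π)..π, P (ρ * cos θ, ρ * sin θ) * (ρ * cos θ) := by
  set G : ℝ → ℝ := fun θ => P (ρ * cos θ, ρ * sin θ) * (ρ * cos θ)
  have hG : Continuous G := hP.comp_circle.mul (by fun_prop)
  have hright : ContinuousOn (fun s => P (√(ρ ^ 2 - s ^ 2), s)) (Icc (-ρ) ρ) :=
    hP.comp (by fun_prop) fun s hs => mem_closedDisc_chord_end hs (.inl rfl)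
  have hleft : ContinuousOn (fun s => P (-√(ρ ^ 2 - s ^ 2), s)) (Icc (-ρ) ρ) :=
    hP.comp (by fun_prop) fun s hs => mem_closedDisc_chord_end hs (.inr rfl)
  -- `s = ρ sin θ` runs over the right half circle for `θ ∈ [-π/2, π/2]` and over the left
  -- half circle, backwards, for `θ ∈ [π/2, 3π/2]`
  have hR :
      ∫ s in (-ρ)..ρ, P (√(ρ ^ 2 - s ^ 2), s) = ∫ θ in (-(π / 2))..(π / 2), G θ := by
    have := integral_comp_mul_sin hρ hright (-(π / 2)) (π / 2)
    rw [sin_neg, sin_pi_div_two, mul_neg_one, mul_one] at this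
    rw [← this]
    refine intervalIntegral.integral_congr fun θ hθ => ?_
    rw [uIcc_of_le (by linarith [pi_pos])] at hθ
    simp only [G, sqrt_sq_sub_mul_sin_sq hρ, abs_of_nonneg (cos_nonneg_of_mem_Icc hθ)]
  have hL : ∫ s in (-ρ)..ρ, P (-√(ρ ^ 2 - s ^ 2), s) =
      -∫ θ in (π / 2)..(π / 2 + π), G θ := by
    have := integral_comp_mul_sin hρ hleft (π / 2) (π / 2 + π)
    rw [sin_add_pi, sin_pi_div_two, mul_neg_one, mul_one,
      intervalIntegral.integral_symm (-ρ) ρ] at this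
    rw [← neg_eq_iff_eq_neg, ← this]
    refine intervalIntegral.integral_congr fun θ hθ => ?_
    rw [uIcc_of_le (by linarith [pi_pos])] at hθ
    simp only [G, sqrt_sq_sub_mul_sin_sq hρ,
      abs_of_nonpos (cos_nonpos_of_pi_div_two_le_of_le hθ.1 (by linarith [hθ.2])), mul_neg,
      neg_neg]
  have hperiodic : Function.Periodic G (2 * π) := fun θ => by
    simp only [G, cos_add_two_pi, sin_add_two_pi]
  rw [intervalIntegral.integral_sub (hright.intervalIntegrable_of_Icc (by linarith))
      (hleft.intervalIntegrable_of_Icc (by linarith)), hR, hL, sub_neg_eq_add,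
    intervalIntegral.integral_add_adjacent_intervals (hG.intervalIntegrable _ _)
      (hG.intervalIntegrable _ _)]
  convert hperiodic.intervalIntegral_add_eq (-(π / 2)) (-π) using 2 <;> ring

theorem integral_sub_vertical_chord_ends (hρ : 0 ≤ ρ) {Q : ℝ × ℝ → ℝ}
    (hQ : ContinuousOn Q (closedDisc ρ)) :
    ∫ s in (-ρ)..ρ, (Q (s, √(ρ ^ 2 - s ^ 2)) - Q (s, -√(ρ ^ 2 - s ^ 2))) =
      ∫ θ in (-π)..π, Q (ρ * cos θ, ρ * sin θ) * (ρ * sin θ) := by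
  have hswap := integral_sub_horizontal_chord_ends hρ (P := Q ∘ Prod.swap)
    (hQ.comp continuous_swap.continuousOn fun q hq => by
      simpa only [closedDisc, mem_ofPred_eq, Prod.fst_swap, Prod.snd_swap, add_comm] using hq)
  set F : ℝ → ℝ := fun θ => Q (ρ * cos θ, ρ * sin θ) * (ρ * sin θ)
  have hperiodic : Function.Periodic F (2 * π) := fun θ => by
    simp only [F, cos_add_two_pi, sin_add_two_pi]
  -- reflect the angle in `π / 4`, which swaps the two coordinates
  have hreflect :
      ∫ θ in (-π)..π, (Q ∘ Prod.swap) (ρ * cos θ, ρ * sin θ) * (ρ * cos θ) =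
      ∫ θ in (-π)..π, F (π / 2 - θ) := by
    simp only [F, Function.comp, Prod.swap, cos_pi_div_two_sub, sin_pi_div_two_sub]
  simp only [Function.comp, Prod.swap] at hswap hreflect
  rw [hswap, hreflect, intervalIntegral.integral_comp_sub_left]
  convert hperiodic.intervalIntegral_add_eq (π / 2 - π) (-π) using 2 <;> ring

/-- A divergence theorem on the disc: `P'` and `Q'` act as `∂P/∂x` and `∂Q/∂y` through the
fundamental theorem of calculus on chords, and `(P, Q)` is tangent to the boundary circle. -/
theorem integral_disc_add_eq_zero_of_flux_eq_zero (hρ : 0 ≤ ρ) {P Q P' Q' : ℝ × ℝ → ℝ}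
    (hP : ContinuousOn P (closedDisc ρ)) (hQ : ContinuousOn Q (closedDisc ρ))
    (hP' : IntegrableOn P' (disc ρ)) (hQ' : IntegrableOn Q' (disc ρ))
    (hPP' : ∀ b ∈ Icc (-ρ) ρ,
      ∫ a in (-√(ρ ^ 2 - b ^ 2))..√(ρ ^ 2 - b ^ 2), P' (a, b) =
        P (√(ρ ^ 2 - b ^ 2), b) - P (-√(ρ ^ 2 - b ^ 2), b))
    (hQQ' : ∀ a ∈ Icc (-ρ) ρ,
      ∫ b in (-√(ρ ^ 2 - a ^ 2))..√(ρ ^ 2 - a ^ 2), Q' (a, b) =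
        Q (a, √(ρ ^ 2 - a ^ 2)) - Q (a, -√(ρ ^ 2 - a ^ 2)))
    (hflux : ∀ x y, x ^ 2 + y ^ 2 = ρ ^ 2 → x * P (x, y) + y * Q (x, y) = 0) :
    ∫ q in disc ρ, (P' q + Q' q) = 0 := by
  have hIcc : uIcc (-ρ) ρ = Icc (-ρ) ρ := uIcc_of_le (by linarith)
  have hPcircle : Continuous fun θ => P (ρ * cos θ, ρ * sin θ) * (ρ * cos θ) :=
    hP.comp_circle.mul (by fun_prop)
  have hQcircle : Continuous fun θ => Q (ρ * cos θ, ρ * sin θ) * (ρ * sin θ) :=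
    hQ.comp_circle.mul (by fun_prop)
  rw [integral_add hP' hQ', integral_disc_eq_intervalIntegral_swap hρ hP',
    integral_disc_eq_intervalIntegral hρ hQ',
    intervalIntegral.integral_congr fun b hb => hPP' b (hIcc ▸ hb),
    intervalIntegral.integral_congr fun a ha => hQQ' a (hIcc ▸ ha),
    integral_sub_horizontal_chord_ends hρ hP, integral_sub_vertical_chord_ends hρ hQ,
    ← intervalIntegral.integral_add (hPcircle.intervalIntegrable _ _)
      (hQcircle.intervalIntegrable _ _)]
  refine (intervalIntegral.integral_congr fun θ _ => ?_).trans intervalIntegral.integral_zero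
  linear_combination hflux (ρ * cos θ) (ρ * sin θ)
    (by linear_combination ρ ^ 2 * sin_sq_add_cos_sq θ)

end Disc

theorem integral_fderivWithin_line_eq_sub {E F : Type*} [NormedAddCommGroup E] [NormedSpace ℝ E]
    [NormedAddCommGroup F] [NormedSpace ℝ F] [CompleteSpace F] {f : E → F} {s : Set E}
    (hs : UniqueDiffOn ℝ s) (hf : ContDiffOn ℝ 1 f s) {p v : E} {a b : ℝ} (hab : a ≤ b)
    (hseg : ∀ t ∈ Icc a b, p + t • v ∈ s) :
    ∫ t in a..b, fderivWithin ℝ f s (p + t • v) v = f (p + b • v) - f (p + a • v) := by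
  have hline : Continuous fun t : ℝ => p + t • v := by fun_prop
  refine intervalIntegral.integral_eq_sub_of_hasDeriv_right_of_le hab
    (hf.continuousOn.comp hline.continuousOn hseg) (fun t ht => ?_)
    (((hf.continuousOn_fderivWithin hs le_rfl).comp hline.continuousOn hseg).clm_apply
      continuousOn_const |>.intervalIntegrable_of_Icc hab)
  have hderiv : HasDerivAt (fun t : ℝ => p + t • v) v t := by
    simpa using ((hasDerivAt_id t).smul_const v).const_add p
  exact ((hf.differentiableOn one_ne_zero _ (hseg t (Ioo_subset_Icc_self ht))).hasFDerivWithinAt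
    |>.comp_hasDerivWithinAt t hderiv.hasDerivWithinAt hseg).mono_of_mem_nhdsWithin
      (Icc_mem_nhdsGT_of_mem ⟨ht.1.le, ht.2⟩)

section Cylinder

variable {ρ h : ℝ}

theorem isOpen_cyl : IsOpen (cyl ρ h) :=
  (isOpen_lt (f := fun x : Fin 3 → ℝ => x 0 ^ 2 + x 1 ^ 2) (by fun_prop) continuous_const).inter
    ((isOpen_lt continuous_const (continuous_apply 2)).inter
      (isOpen_lt (continuous_apply 2) continuous_const))

theorem convex_cyl : Convex ℝ (cyl ρ h) := by
  rintro x ⟨hx, hx0, hxh⟩ y ⟨hy, hy0, hyh⟩ s t hs ht hst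
  obtain rfl : t = 1 - s := by linarith
  rcases hs.eq_or_lt with rfl | hs'
  · simpa using ⟨hy, hy0, hyh⟩
  refine ⟨?_, ?_, ?_⟩ <;> simp only [Pi.add_apply, Pi.smul_apply, smul_eq_mul]
  · nlinarith [mul_nonneg (mul_nonneg hs ht) (sq_nonneg (x 0 - y 0)),
      mul_nonneg (mul_nonneg hs ht) (sq_nonneg (x 1 - y 1)),
      mul_lt_mul_of_pos_left hx hs', mul_le_mul_of_nonneg_left hy.le ht]
  · nlinarith
  · nlinarith

theorem isCompact_closure_cyl : IsCompact (closure (cyl ρ h)) := by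
  refine ((Metric.isBounded_Icc (fun _ : Fin 3 => -(|ρ| + |h|)) fun _ => |ρ| + |h|).subset
    ?_).isCompact_closure
  rintro x ⟨hxy, hz0, hzh⟩
  have h0 : |x 0| < |ρ| := sq_lt_sq.1 (by nlinarith [sq_nonneg (x 1)])
  have h1 : |x 1| < |ρ| := sq_lt_sq.1 (by nlinarith [sq_nonneg (x 0)])
  constructor <;> intro i <;> fin_cases i <;>
    simp only [Fin.zero_eta, Fin.mk_one, Fin.reduceFinMk, Fin.isValue] <;>
    linarith [abs_lt.1 h0, abs_lt.1 h1, abs_nonneg ρ, abs_nonneg h, le_abs_self h]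

theorem mem_closure_cyl (hρ : 0 < ρ) (hh : 0 < h) {a b c : ℝ} (hab : (a, b) ∈ closedDisc ρ)
    (hc : c ∈ Icc 0 h) : ![a, b, c] ∈ closure (cyl ρ h) := by
  have hseg : openSegment ℝ ![0, 0, h / 2] ![a, b, c] ⊆ cyl ρ h := by
    rintro _ ⟨s, t, hs, ht, hst, rfl⟩
    obtain rfl : s = 1 - t := by linarith
    change a ^ 2 + b ^ 2 ≤ ρ ^ 2 at hab
    show ((1 - t) * 0 + t * a) ^ 2 + ((1 - t) * 0 + t * b) ^ 2 < ρ ^ 2 ∧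
      0 < (1 - t) * (h / 2) + t * c ∧ (1 - t) * (h / 2) + t * c < h
    have ht2 : t ^ 2 < 1 := by nlinarith
    refine ⟨?_, by nlinarith [hc.1], by nlinarith [hc.2]⟩
    nlinarith [mul_le_mul_of_nonneg_left hab (sq_nonneg t),
      mul_lt_mul_of_pos_right ht2 (pow_pos hρ 2)]
  exact closure_mono hseg (segment_subset_closure_openSegment (right_mem_segment ℝ _ _))

theorem uniqueDiffOn_closure_cyl (hρ : 0 < ρ) (hh : 0 < h) :
    UniqueDiffOn ℝ (closure (cyl ρ h)) :=
  uniqueDiffOn_convex convex_cyl.closure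
    ⟨![0, 0, h / 2], isOpen_cyl.subset_interior_iff.2 subset_closure
      (show (0 : ℝ) ^ 2 + 0 ^ 2 < ρ ^ 2 ∧ 0 < h / 2 ∧ h / 2 < h from
        ⟨by nlinarith, by positivity, by linarith⟩)⟩

def cylCoords : ℝ × ℝ × ℝ ≃ᵐ (Fin 3 → ℝ) :=
  ((MeasurableEquiv.piFinSuccAbove (fun _ => ℝ) 2).trans
    ((MeasurableEquiv.refl ℝ).prodCongr MeasurableEquiv.finTwoArrow)).symm

theorem cylCoords_apply (p : ℝ × ℝ × ℝ) : cylCoords p = ![p.2.1, p.2.2, p.1] := by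
  apply cylCoords.symm.injective
  rw [MeasurableEquiv.symm_apply_apply]
  rfl

theorem measurePreserving_cylCoords : MeasurePreserving cylCoords (volume.prod volume) volume :=
  ((volume_preserving_piFinSuccAbove (fun _ => ℝ) 2).trans
    ((MeasurePreserving.id volume).prod (volume_preserving_finTwoArrow ℝ))).symm _

theorem cylCoords_preimage_cyl : cylCoords ⁻¹' cyl ρ h = Ioo 0 h ×ˢ disc ρ := by
  ext ⟨c, a, b⟩
  simp [cylCoords_apply, cyl, disc, and_comm]

theorem integral_cyl_eq_setIntegral_prod (F : (Fin 3 → ℝ) → ℝ) :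
    ∫ x in cyl ρ h, F x =
      ∫ p in Ioo 0 h ×ˢ disc ρ, F ![p.2.1, p.2.2, p.1] ∂volume.prod volume := by
  rw [← measurePreserving_cylCoords.setIntegral_preimage_emb cylCoords.measurableEmbedding,
    cylCoords_preimage_cyl]
  simp only [cylCoords_apply]

theorem integrableOn_comp_cylCoords {F : (Fin 3 → ℝ) → ℝ} (hF : IntegrableOn F (cyl ρ h)) :
    IntegrableOn (fun p : ℝ × ℝ × ℝ => F ![p.2.1, p.2.2, p.1]) (Ioo 0 h ×ˢ disc ρ)
      (volume.prod volume) := by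
  rw [← measurePreserving_cylCoords.integrableOn_comp_preimage cylCoords.measurableEmbedding,
    cylCoords_preimage_cyl] at hF
  simpa only [Function.comp_def, cylCoords_apply] using hF

theorem integral_cyl_eq_integral_Ioo_disc {F : (Fin 3 → ℝ) → ℝ}
    (hF : IntegrableOn F (cyl ρ h)) :
    ∫ x in cyl ρ h, F x = ∫ c in Ioo 0 h, ∫ q in disc ρ, F ![q.1, q.2, c] := by
  rw [integral_cyl_eq_setIntegral_prod, setIntegral_prod _ (integrableOn_comp_cylCoords hF)]

theorem integral_cyl_eq_integral_disc_Ioo {F : (Fin 3 → ℝ) → ℝ}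
    (hF : IntegrableOn F (cyl ρ h)) :
    ∫ x in cyl ρ h, F x = ∫ q in disc ρ, ∫ c in Ioo 0 h, F ![q.1, q.2, c] := by
  rw [integral_cyl_eq_setIntegral_prod, ← setIntegral_prod_swap]
  exact setIntegral_prod _ (integrableOn_comp_cylCoords hF).swap

theorem volume_real_cyl (hh : 0 ≤ h) : volume.real (cyl ρ h) = π * ρ ^ 2 * h := by
  rw [measureReal_def, ← measurePreserving_cylCoords.measure_preimage
    isOpen_cyl.measurableSet.nullMeasurableSet, cylCoords_preimage_cyl, Measure.prod_prod,
    ENNReal.toReal_mul, Real.volume_Ioo, ENNReal.toReal_ofReal (by linarith), ← measureReal_def,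
    volume_real_disc]
  ring

theorem integrableOn_cyl {F : (Fin 3 → ℝ) → ℝ} (hF : ContinuousOn F (closure (cyl ρ h))) :
    IntegrableOn F (cyl ρ h) :=
  (hF.integrableOn_compact isCompact_closure_cyl).mono_set subset_closure

theorem contDiffOn_pdC (hρ : 0 < ρ) (hh : 0 < h) {m n : WithTop ℕ∞} (hmn : m + 1 ≤ n)
    {f : (Fin 3 → ℝ) → ℝ} (hf : ContDiffOn ℝ n f (closure (cyl ρ h))) (i : Fin 3) :
    ContDiffOn ℝ m (pdC ρ h i f) (closure (cyl ρ h)) :=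
  (hf.fderivWithin (uniqueDiffOn_closure_cyl hρ hh) hmn).clm_apply contDiffOn_const

theorem continuousOn_pdC_pdC (hρ : 0 < ρ) (hh : 0 < h) {u : (Fin 3 → ℝ) → ℝ}
    (hu : ContDiffOn ℝ 2 u (closure (cyl ρ h))) (i j : Fin 3) :
    ContinuousOn (pdC ρ h i (pdC ρ h j u)) (closure (cyl ρ h)) :=
  (contDiffOn_pdC (m := 0) hρ hh le_rfl (contDiffOn_pdC hρ hh (by norm_num) hu j) i).continuousOn

theorem continuousOn_lapC (hρ : 0 < ρ) (hh : 0 < h) {u : (Fin 3 → ℝ) → ℝ}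
    (hu : ContDiffOn ℝ 2 u (closure (cyl ρ h))) :
    ContinuousOn (lapC ρ h u) (closure (cyl ρ h)) :=
  continuousOn_finsetSum _ fun i _ => continuousOn_pdC_pdC hρ hh hu i i

theorem ContinuousOn.comp_horizontal_slice (hρ : 0 < ρ) (hh : 0 < h) {F : (Fin 3 → ℝ) → ℝ}
    (hF : ContinuousOn F (closure (cyl ρ h))) {c : ℝ} (hc : c ∈ Icc 0 h) :
    ContinuousOn (fun q : ℝ × ℝ => F ![q.1, q.2, c]) (closedDisc ρ) :=
  hF.comp (by fun_prop) fun _ hq => mem_closure_cyl hρ hh hq hc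

theorem integral_pdC_two_pdC_two_cyl (hρ : 0 < ρ) (hh : 0 < h) {u : (Fin 3 → ℝ) → ℝ}
    {φ α : ℝ} (hu : ContDiffOn ℝ 2 u (closure (cyl ρ h))) (hbc : BC ρ h u φ α) :
    ∫ x in cyl ρ h, pdC ρ h 2 (pdC ρ h 2 u) x = α * (π * ρ ^ 2) := by
  have hvertical :
      ∀ q ∈ disc ρ, ∫ c in Ioo 0 h, pdC ρ h 2 (pdC ρ h 2 u) ![q.1, q.2, c] = α := by
    rintro ⟨a, b⟩ hq
    have hline : ∀ t : ℝ, ![a, b, 0] + t • Pi.single 2 1 = ![a, b, t] := fun t => by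
      ext i; fin_cases i <;> simp
    have hftc := integral_fderivWithin_line_eq_sub (uniqueDiffOn_closure_cyl hρ hh)
      (contDiffOn_pdC hρ hh (by norm_num) hu 2) hh.le
      fun t ht => hline t ▸ mem_closure_cyl hρ hh (disc_subset_closedDisc hq) ht
    simp only [hline] at hftc
    obtain ⟨-, htop, -, hbottom⟩ := hbc.1 a b (disc_subset_closedDisc hq)
    rw [← integral_Ioc_eq_integral_Ioo, ← intervalIntegral.integral_of_le hh.le]
    exact hftc.trans (by rw [htop, hbottom, sub_zero])
  rw [integral_cyl_eq_integral_disc_Ioo (integrableOn_cyl (continuousOn_pdC_pdC hρ hh hu 2 2)),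
    setIntegral_congr_fun measurableSet_disc hvertical, setIntegral_const, volume_real_disc,
    smul_eq_mul, mul_comm]

theorem integral_slice_pdC_zero_pdC_zero_add_pdC_one_pdC_one (hρ : 0 < ρ) (hh : 0 < h)
    {u : (Fin 3 → ℝ) → ℝ} {φ α : ℝ} (hu : ContDiffOn ℝ 2 u (closure (cyl ρ h)))
    (hbc : BC ρ h u φ α) {c : ℝ} (hc : c ∈ Icc 0 h) :
    ∫ q in disc ρ, (pdC ρ h 0 (pdC ρ h 0 u) ![q.1, q.2, c] +
      pdC ρ h 1 (pdC ρ h 1 u) ![q.1, q.2, c]) = 0 := by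
  have hU := fun i => (contDiffOn_pdC (m := 1) hρ hh (by norm_num) hu i).continuousOn
    |>.comp_horizontal_slice hρ hh hc
  have hU' : ∀ i, IntegrableOn (fun q : ℝ × ℝ => pdC ρ h i (pdC ρ h i u) ![q.1, q.2, c])
      (disc ρ) := fun i =>
    ((continuousOn_pdC_pdC hρ hh hu i i).comp_horizontal_slice hρ hh
      hc).integrableOn_compact isCompact_closedDisc |>.mono_set disc_subset_closedDisc
  refine integral_disc_add_eq_zero_of_flux_eq_zero hρ.le (hU 0) (hU 1) (hU' 0) (hU' 1)
    (fun b hb => ?_) (fun a ha => ?_) fun x y hxy => hbc.2 x y c hxy hc.1 hc.2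
  · have hline : ∀ t : ℝ, ![0, b, c] + t • Pi.single 0 1 = ![t, b, c] := fun t => by
      ext i; fin_cases i <;> simp
    have hftc := integral_fderivWithin_line_eq_sub (uniqueDiffOn_closure_cyl hρ hh)
      (contDiffOn_pdC hρ hh (by norm_num) hu 0) (neg_le_self (Real.sqrt_nonneg (ρ ^ 2 - b ^ 2)))
      fun t ht => hline t ▸ mem_closure_cyl hρ hh
        ((add_comm _ _).trans_le (sq_add_sq_le_of_mem_Icc_sqrt (sq_le_sq' hb.1 hb.2) ht)) hc
    simp only [hline] at hftc
    exact hftc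
  · have hline : ∀ t : ℝ, ![a, 0, c] + t • Pi.single 1 1 = ![a, t, c] := fun t => by
      ext i; fin_cases i <;> simp
    have hftc := integral_fderivWithin_line_eq_sub (uniqueDiffOn_closure_cyl hρ hh)
      (contDiffOn_pdC hρ hh (by norm_num) hu 1) (neg_le_self (Real.sqrt_nonneg (ρ ^ 2 - a ^ 2)))
      fun t ht => hline t ▸ mem_closure_cyl hρ hh
        (sq_add_sq_le_of_mem_Icc_sqrt (sq_le_sq' ha.1 ha.2) ht) hc
    simp only [hline] at hftc
    exact hftc

theorem integral_pdC_zero_pdC_zero_add_pdC_one_pdC_one_cyl (hρ : 0 < ρ) (hh : 0 < h)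
    {u : (Fin 3 → ℝ) → ℝ} {φ α : ℝ} (hu : ContDiffOn ℝ 2 u (closure (cyl ρ h)))
    (hbc : BC ρ h u φ α) :
    ∫ x in cyl ρ h, (pdC ρ h 0 (pdC ρ h 0 u) x + pdC ρ h 1 (pdC ρ h 1 u) x) = 0 := by
  have hint : ContinuousOn (fun x => pdC ρ h 0 (pdC ρ h 0 u) x + pdC ρ h 1 (pdC ρ h 1 u) x)
      (closure (cyl ρ h)) :=
    (continuousOn_pdC_pdC hρ hh hu 0 0).add (continuousOn_pdC_pdC hρ hh hu 1 1)
  rw [integral_cyl_eq_integral_Ioo_disc (integrableOn_cyl hint)]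
  exact (setIntegral_congr_fun measurableSet_Ioo fun c hc =>
    integral_slice_pdC_zero_pdC_zero_add_pdC_one_pdC_one hρ hh hu hbc
      (Ioo_subset_Icc_self hc)).trans (integral_zero _ _)

theorem integral_lapC_cyl (hρ : 0 < ρ) (hh : 0 < h) {u : (Fin 3 → ℝ) → ℝ} {φ α : ℝ}
    (hu : ContDiffOn ℝ 2 u (closure (cyl ρ h))) (hbc : BC ρ h u φ α) :
    ∫ x in cyl ρ h, lapC ρ h u x = α * (π * ρ ^ 2) := by
  have hint := fun i => integrableOn_cyl (continuousOn_pdC_pdC hρ hh hu i i)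
  simp only [lapC, Fin.sum_univ_three]
  rw [integral_add (f := fun x => pdC ρ h 0 (pdC ρ h 0 u) x + pdC ρ h 1 (pdC ρ h 1 u) x)
      ((hint 0).add (hint 1)) (hint 2),
    integral_pdC_zero_pdC_zero_add_pdC_one_pdC_one_cyl hρ hh hu hbc,
    integral_pdC_two_pdC_two_cyl hρ hh hu hbc, zero_add]

end Cylinder

/-- If `u ∈ C²(closure Ω)` satisfies (BC), then
`πρ²α²/h ≤ ∫_Ω (Δu)²`. -/
theorem laplacian_lower_estimate_cylinder (ρ h : ℝ) (hρ : 0 < ρ) (hh : 1 / 2 < h)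
    (u : (Fin 3 → ℝ) → ℝ) (φ α : ℝ)
    (hu : ContDiffOn ℝ 2 u (closure (cyl ρ h)))
    (hbc : BC ρ h u φ α) :
    π * ρ ^ 2 * α ^ 2 / h ≤ ∫ x in cyl ρ h, (lapC ρ h u x) ^ 2 := by
  have hh0 : 0 < h := by linarith
  have hlap := continuousOn_lapC hρ hh0 hu
  have hfinite : volume (cyl ρ h) ≠ ⊤ :=
    ((measure_mono subset_closure).trans_lt isCompact_closure_cyl.measure_lt_top).ne
  calc π * ρ ^ 2 * α ^ 2 / h
      = (∫ x in cyl ρ h, lapC ρ h u x) ^ 2 / volume.real (cyl ρ h) := by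
        rw [integral_lapC_cyl hρ hh0 hu hbc, volume_real_cyl hh0.le]
        field_simp
    _ ≤ ∫ x in cyl ρ h, (lapC ρ h u x) ^ 2 :=
        sq_setIntegral_div_measureReal_le hfinite (integrableOn_cyl hlap)
          (integrableOn_cyl (hlap.pow 2))
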